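/- arXiv:2111.14071 — 5 statements merged into one kernel-verified Lean document; each statement's English description precedes it below -/
import Mathlib

section
/- Let π be a possibility distribution on the finite set [K] = {1,…,K} with π(1) ≥ π(2) ≥ ⋯ ≥ π(K) and π(1) = 1. Partition [K] into consecutive blocks I₁,…,I_ℓ of equal possibility value, with common values π¹ > π² > ⋯ > π^ℓ. Then a probability vector p ∈ [0,1]^K with Σ_{i∈[K]} p_i = 1 satisfies Σ_{i∈A} p_i ≥ 1 - max_{i∉A} π(i) for every nonempty proper subset A ⊂ [K] if and only if it satisfies the ℓ-1 constraints Σ_{i ∈ I₁∪⋯∪I_j} p_i ≥ 1 - π^{j+1} for all j ∈ [ℓ-1]. -/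
open Set

/-- Proposition 1: for a nonincreasing possibility distribution on [K] with level
blocks I₀,…,I_{ℓ-1} (0-indexed) of strictly decreasing common values v j, a
probability vector p dominates the induced necessity measure on all nonempty
proper subsets iff it satisfies the ℓ-1 block constraints. -/
theorem stmt_1 (K ℓ : ℕ) (hK : 0 < K) (hℓ : 0 < ℓ)
    (π : Fin K → ℝ) (hπ : ∀ i, π i ∈ Set.Icc (0:ℝ) 1)
    (I : ℕ → Finset (Fin K)) (v : ℕ → ℝ)
    (hpart : ∀ i : Fin K, ∃! j, j < ℓ ∧ i ∈ I j)
    (hne : ∀ j, j < ℓ → (I j).Nonempty)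
    (hval : ∀ j, j < ℓ → ∀ i ∈ I j, π i = v j)
    (hdec : ∀ j k, j < k → k < ℓ → v k < v j)
    (hv0 : v 0 = 1)
    (p : Fin K → ℝ) (hp0 : ∀ i, 0 ≤ p i) (hp1 : ∑ i, p i = 1) :
    (∀ A : Finset (Fin K), A.Nonempty → A ≠ Finset.univ →
        1 - sSup (π '' ↑(Aᶜ)) ≤ ∑ i ∈ A, p i) ↔
    (∀ j : ℕ, j + 1 < ℓ →
        1 - v (j + 1) ≤ ∑ i ∈ (Finset.range (j + 1)).biUnion I, p i) := by
  have hle : ∀ j k, j ≤ k → k < ℓ → v k ≤ v j := by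
    intro j k hjk hk
    rcases eq_or_lt_of_le hjk with h | h
    · exact le_of_eq (by rw [h])
    · exact le_of_lt (hdec j k h hk)
  constructor
  · intro h j hj
    set A := (Finset.range (j + 1)).biUnion I with hA
    obtain ⟨i0, hi0⟩ := hne 0 hℓ
    obtain ⟨i1, hi1⟩ := hne (j + 1) hj
    have hAne : A.Nonempty := ⟨i0, Finset.mem_biUnion.2 ⟨0, Finset.mem_range.2 (Nat.succ_pos j), hi0⟩⟩
    have hi1A : i1 ∉ A := by
      intro hmem
      obtain ⟨k, hk, hik⟩ := Finset.mem_biUnion.1 hmem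
      have hk' := Finset.mem_range.1 hk
      obtain ⟨m, _, huniq⟩ := hpart i1
      have h1 := huniq k ⟨lt_trans hk' hj, hik⟩
      have h2 := huniq (j + 1) ⟨hj, hi1⟩
      omega
    have hAuniv : A ≠ Finset.univ := by
      intro he; exact hi1A (he ▸ Finset.mem_univ i1)
    have hsup : sSup (π '' ↑(Aᶜ)) = v (j + 1) := by
      apply IsGreatest.csSup_eq
      constructor
      · exact ⟨i1, by simpa using hi1A, hval (j + 1) hj i1 hi1⟩
      · rintro x ⟨y, hy, rfl⟩
        have hyA : y ∉ A := by simpa using hy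
        obtain ⟨k, ⟨hk, hyk⟩, _⟩ := hpart y
        have hkge : j + 1 ≤ k := by
          by_contra hc
          exact hyA (Finset.mem_biUnion.2 ⟨k, Finset.mem_range.2 (by omega), hyk⟩)
        rw [hval k hk y hyk]
        exact hle (j + 1) k hkge hk
    have := h A hAne hAuniv
    rwa [hsup] at this
  · intro h A hAne hAuniv
    have hAc : (Aᶜ : Finset (Fin K)).Nonempty := by
      rw [← Finset.card_pos, Finset.card_compl]
      have : A.card < Fintype.card (Fin K) :=
        lt_of_le_of_ne (Finset.card_le_univ A) (fun hc => hAuniv ((Finset.card_eq_iff_eq_univ A).1 hc))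
      omega
    obtain ⟨z, hz⟩ := hAc
    classical
    have hP : ∃ j, j < ℓ ∧ ∃ i ∈ Aᶜ, i ∈ I j := by
      obtain ⟨k, ⟨hk, hzk⟩, _⟩ := hpart z
      exact ⟨k, hk, z, hz, hzk⟩
    let m := Nat.find hP
    obtain ⟨hmℓ, im, himc, him⟩ := Nat.find_spec hP
    have hsup : sSup (π '' ↑(Aᶜ)) = v m := by
      apply IsGreatest.csSup_eq
      constructor
      · exact ⟨im, himc, hval m hmℓ im him⟩
      · rintro x ⟨y, hy, rfl⟩
        have hyc : y ∈ Aᶜ := hy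
        obtain ⟨k, ⟨hk, hyk⟩, _⟩ := hpart y
        have : m ≤ k := Nat.find_min' hP ⟨hk, y, hyc, hyk⟩
        rw [hval k hk y hyk]
        exact hle m k this hk
    rw [hsup]
    rcases Nat.eq_zero_or_pos m with hm0 | hmpos
    · rw [hm0, hv0]
      simpa using Finset.sum_nonneg (fun i _ => hp0 i)
    · obtain ⟨j, hj⟩ : ∃ j, m = j + 1 := ⟨m - 1, by omega⟩
      have hsub : (Finset.range (j + 1)).biUnion I ⊆ A := by
        intro i hi
        obtain ⟨k, hk, hik⟩ := Finset.mem_biUnion.1 hi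
        have hk' := Finset.mem_range.1 hk
        by_contra hiA
        have : m ≤ k := Nat.find_min' hP ⟨by omega, i, Finset.mem_compl.2 hiA, hik⟩
        omega
      calc 1 - v m ≤ ∑ i ∈ (Finset.range (j + 1)).biUnion I, p i := by
            rw [hj]; exact h j (by omega)
        _ ≤ ∑ i ∈ A, p i :=
            Finset.sum_le_sum_of_subset_of_nonneg hsub (fun i _ _ => hp0 i)
end

section
/- With the setting of the finite possibility distribution π on [K] and blocks I₁,…,I_ℓ with values π¹ > ⋯ > π^ℓ: for every nonempty proper subset A ⊂ [K], if k is the smallest index with I_k ⊄ A, then the block constraints Σ_{i ∈ I₁∪⋯∪I_{k-1}} p_i ≥ 1 - π^k (vacuous if k=1) imply Σ_{i∈A} p_i ≥ 1 - max_{i∉A} π(i), using that max_{i∉A} π(i) = π^k. -/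
open Set

/-- For a proper subset A, if k is the least block index with I_k ⊄ A (so all
earlier blocks are contained in A), then the block constraint on I₀ ∪ ⋯ ∪ I_{k-1}
implies the necessity constraint for A, using max_{i∉A} π i = v k. -/
theorem stmt_2 (K ℓ : ℕ) (hK : 0 < K) (hℓ : 0 < ℓ)
    (π : Fin K → ℝ) (hπ : ∀ i, π i ∈ Set.Icc (0:ℝ) 1)
    (I : ℕ → Finset (Fin K)) (v : ℕ → ℝ)
    (hpart : ∀ i : Fin K, ∃! j, j < ℓ ∧ i ∈ I j)
    (hne : ∀ j, j < ℓ → (I j).Nonempty)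
    (hval : ∀ j, j < ℓ → ∀ i ∈ I j, π i = v j)
    (hdec : ∀ j k, j < k → k < ℓ → v k < v j)
    (hv0 : v 0 = 1)
    (p : Fin K → ℝ) (hp0 : ∀ i, 0 ≤ p i) (hp1 : ∑ i, p i = 1)
    (A : Finset (Fin K)) (hA : A.Nonempty) (hAproper : A ≠ Finset.univ)
    (k : ℕ) (hk : k < ℓ)
    (hknotsub : ¬ I k ⊆ A) (hmin : ∀ j < k, I j ⊆ A)
    (hblock : 1 - v k ≤ ∑ i ∈ (Finset.range k).biUnion I, p i) :
    sSup (π '' ↑(Aᶜ)) = v k ∧ 1 - sSup (π '' ↑(Aᶜ)) ≤ ∑ i ∈ A, p i := by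
  obtain ⟨i₀, hi₀I, hi₀A⟩ := Finset.not_subset.mp hknotsub
  have hmem : v k ∈ π '' ↑(Aᶜ) := by
    exact ⟨i₀, by simpa using hi₀A, hval k hk i₀ hi₀I⟩
  have hub : ∀ x ∈ π '' ↑(Aᶜ), x ≤ v k := by
    rintro x ⟨i, hi, rfl⟩
    simp only [Finset.coe_compl, Set.mem_compl_iff, Finset.mem_coe] at hi
    obtain ⟨j, ⟨hjℓ, hij⟩, -⟩ := hpart i
    have hjk : k ≤ j := by
      by_contra h
      exact hi (hmin j (lt_of_not_ge h) hij)
    rw [hval j hjℓ i hij]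
    rcases eq_or_lt_of_le hjk with h | h
    · exact le_of_eq (by rw [h])
    · exact le_of_lt (hdec k j h hjℓ)
  have hsup : sSup (π '' ↑(Aᶜ)) = v k := IsGreatest.csSup_eq ⟨hmem, hub⟩
  refine ⟨hsup, ?_⟩
  rw [hsup]
  refine le_trans hblock (Finset.sum_le_sum_of_subset_of_nonneg ?_ fun i _ _ => hp0 i)
  intro i hi
  obtain ⟨j, hj, hij⟩ := Finset.mem_biUnion.mp hi
  exact hmin j (Finset.mem_range.mp hj) hij
end

section
/- Let π: ℝⁿ → [0,1] be the joint possibility distribution with nested λ-cuts C(λ) satisfying N(C(λ)) = 1 - λ for all λ ∈ [0,1], where N is the necessity measure induced by π. Then the set of probability measures consistent with π equals {P ∈ 𝒫ℳ(ℝⁿ) : P(C(λ)) ≥ 1 - λ for all λ ∈ [0,1]}. That is, a probability measure P satisfies N(A) ≤ P(A) for all measurable A if and only if P(C(λ)) ≥ 1 - λ for all λ ∈ [0,1]. -/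
open Set MeasureTheory

/-- Proposition 2: the set of probability measures consistent with the joint
possibility distribution π (i.e. dominating the induced necessity measure on
every measurable set) is exactly the set of probability measures P with
P(C(λ)) ≥ 1 - λ for all λ ∈ [0,1]. -/
theorem stmt_8 (n : ℕ) (π : (Fin n → ℝ) → ℝ)
    (hπ : ∀ a, π a ∈ Set.Icc (0:ℝ) 1)
    (C : ℝ → Set (Fin n → ℝ))
    (hcut : ∀ lam ∈ Set.Ioc (0:ℝ) 1, C lam = {a | lam ≤ π a})
    (hC0 : {a | 0 < π a} ⊆ C 0)
    (hmeas : ∀ lam ∈ Set.Icc (0:ℝ) 1, MeasurableSet (C lam))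
    (hnested : ∀ lam₁ lam₂ : ℝ, lam₂ ≤ lam₁ → C lam₁ ⊆ C lam₂)
    (hC1 : ∃ ahat, C 1 = {ahat})
    (hN : ∀ lam ∈ Set.Icc (0:ℝ) 1, sSup (π '' (C lam)ᶜ) = lam)
    (P : Measure (Fin n → ℝ)) [IsProbabilityMeasure P] :
    (∀ A : Set (Fin n → ℝ), MeasurableSet A →
        1 - sSup (π '' Aᶜ) ≤ (P A).toReal) ↔
      (∀ lam ∈ Set.Icc (0:ℝ) 1, 1 - lam ≤ (P (C lam)).toReal) := by
  constructor
  · intro h lam hlam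
    have := h (C lam) (hmeas lam hlam)
    rwa [hN lam hlam] at this
  · intro h A hA
    set s := sSup (π '' Aᶜ) with hs
    by_cases hAc : Aᶜ = ∅
    · have hAuniv : A = univ := by
        rw [← compl_empty_iff, hAc]
      rw [hAc, image_empty, Real.sSup_empty] at hs
      rw [hs, hAuniv, measure_univ]
      norm_num
    · obtain ⟨a, ha⟩ := nonempty_iff_ne_empty.mpr hAc
      have hbdd : BddAbove (π '' Aᶜ) := ⟨1, fun x ⟨y, _, hy⟩ => hy ▸ (hπ y).2⟩
      have hs0 : 0 ≤ s := le_trans (hπ a).1 (le_csSup hbdd ⟨a, ha, rfl⟩)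
      have key : ∀ ε > (0:ℝ), 1 - (P A).toReal ≤ s + ε := by
        intro ε hε
        by_cases h1 : s + ε < 1
        · have hlam : s + ε ∈ Set.Ioc (0:ℝ) 1 := ⟨by linarith, by linarith⟩
          have hsub : C (s + ε) ⊆ A := by
            rw [hcut _ hlam]
            intro x hx
            by_contra hxA
            have : π x ≤ s := le_csSup hbdd ⟨x, hxA, rfl⟩
            exact absurd hx (by simp only [mem_setOf_eq]; linarith)
          have hmono : (P (C (s + ε))).toReal ≤ (P A).toReal :=
            ENNReal.toReal_mono (measure_ne_top P A) (measure_mono hsub)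
          have := h (s + ε) ⟨by linarith, by linarith⟩
          linarith
        · have : (0:ℝ) ≤ (P A).toReal := ENNReal.toReal_nonneg
          linarith
      have : 1 - (P A).toReal ≤ s := le_of_forall_pos_le_add key
      linarith
end

section
/- Let x, â ∈ ℝⁿ, B an n×n matrix, bounds L_j ≤ U_j (L_j = a̲_j(λ) - â_j ≤ 0 ≤ a̅_j(λ) - â_j = U_j), and radius r = δ̅(λ) ≥ 0. The optimal value of max { yᵀx + âᵀx : L_j ≤ y_j ≤ U_j ∀j, ‖By‖₂ ≤ r } equals the optimal value of min { γ·r + Σ_j α_j U_j - Σ_j β_j L_j + âᵀx : α_j - β_j + B_jᵀu = x_j ∀j, ‖u‖₂ ≤ γ, α, β ≥ 0, γ ≥ 0, u ∈ ℝⁿ }, where B_j is the j-th column of B. (Strong conic/Lagrangian duality for this bounded convex program with nonempty interior, assuming L_j < 0 < U_j and r > 0.) -/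
open Set

/-!
Weak duality: for primal-feasible `y` and dual-feasible `(α, β, γ, u)`,
`yᵀx = yᵀ(α - β) + (By)ᵀu ≤ αᵀU - βᵀL + rγ`, by the box constraints and Cauchy–Schwarz.

Strong duality: let `v` bound the primal objective. The strict hypograph of the perturbed value
function `z ↦ sup {yᵀx | y ∈ box, ‖By + z‖ < r}` is open and convex and misses `(0, v)`.
A functional separating `(0, v)` from it has positive last coordinate, because `y = 0` is strictly
feasible; normalised, it yields a multiplier `u` with `yᵀ(x - Bᵀu) + r‖u‖ ≤ v` on the whole box.
Splitting `x - Bᵀu = α - β` into positive and negative parts and evaluating at the vertex of the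
box that maximises `yᵀ(x - Bᵀu)` gives a dual point of value at most `v`.
-/

theorem ContinuousLinearMap.mul_opNorm_le_of_forall_norm_lt {F : Type*} [NormedAddCommGroup F]
    [NormedSpace ℝ F] {h : StrongDual ℝ F} {r M : ℝ} (hr : 0 < r)
    (hM : ∀ w, ‖w‖ < r → h w ≤ M) : r * ‖h‖ ≤ M := by
  rw [← le_div_iff₀' hr]
  refine le_of_forall_lt fun c hc => ?_
  obtain ⟨w, hw, hcw⟩ := h.exists_lt_apply_of_lt_opNorm hc
  have hrw : ‖r • w‖ < r := by
    rw [norm_smul, Real.norm_of_nonneg hr.le]; exact mul_lt_of_lt_one_right hr hw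
  have h₁ := hM _ hrw
  have h₂ := hM (-(r • w)) (by rwa [norm_neg])
  rw [map_smul, smul_eq_mul] at h₁
  rw [map_neg, map_smul, smul_eq_mul] at h₂
  rw [lt_div_iff₀' hr]
  calc r * c < r * |h w| := mul_lt_mul_of_pos_left (by rwa [← Real.norm_eq_abs]) hr
    _ ≤ M := by rw [← abs_of_pos hr, ← abs_mul]; exact abs_le.2 ⟨by linarith, h₁⟩

section NormBallConstraint

variable {E F : Type*} [AddCommGroup E] [Module ℝ E] [NormedAddCommGroup F] [NormedSpace ℝ F]

def perturbedHypograph (C : Set E) (A : E →ₗ[ℝ] F) (ℓ : E →ₗ[ℝ] ℝ) (r : ℝ) : Set (F × ℝ) :=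
  {p | ∃ y ∈ C, ‖A y + p.1‖ < r ∧ p.2 < ℓ y}

variable {C : Set E} {A : E →ₗ[ℝ] F} {ℓ : E →ₗ[ℝ] ℝ} {r : ℝ}

theorem isOpen_perturbedHypograph : IsOpen (perturbedHypograph C A ℓ r) := by
  have : perturbedHypograph C A ℓ r = ⋃ y ∈ C, {p : F × ℝ | ‖A y + p.1‖ < r ∧ p.2 < ℓ y} := by
    ext p; simp only [perturbedHypograph, mem_iUnion, mem_ofPred_eq, exists_prop]
  rw [this]
  exact isOpen_biUnion fun y _ =>
    (isOpen_lt (by fun_prop) continuous_const).and (isOpen_lt continuous_snd continuous_const)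

theorem convex_perturbedHypograph (hC : Convex ℝ C) : Convex ℝ (perturbedHypograph C A ℓ r) := by
  rintro ⟨z₁, t₁⟩ ⟨y₁, hy₁, hz₁ : ‖A y₁ + z₁‖ < r, ht₁ : t₁ < ℓ y₁⟩
    ⟨z₂, t₂⟩ ⟨y₂, hy₂, hz₂ : ‖A y₂ + z₂‖ < r, ht₂ : t₂ < ℓ y₂⟩ a b ha hb hab
  refine ⟨a • y₁ + b • y₂, hC hy₁ hy₂ ha hb hab, ?_, ?_⟩
  · have := convex_ball (0 : F) r (mem_ball_zero_iff.2 hz₁) (mem_ball_zero_iff.2 hz₂) ha hb hab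
    rw [mem_ball_zero_iff, smul_add, smul_add, add_add_add_comm, ← map_smul, ← map_smul,
      ← map_add] at this
    exact this
  · simp only [map_add, map_smul, Prod.snd_add, Prod.smul_snd, smul_eq_mul]
    rcases ha.eq_or_lt with rfl | ha
    · simp_all
    · nlinarith

theorem exists_dual_of_forall_le (hC : Convex ℝ C) (h0 : 0 ∈ C) (hr : 0 < r) {v : ℝ}
    (hv : ∀ y ∈ C, ‖A y‖ ≤ r → ℓ y ≤ v) :
    ∃ h : StrongDual ℝ F, ∀ y ∈ C, ℓ y - h (A y) + r * ‖h‖ ≤ v := by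
  have hv_notMem : ((0 : F), v) ∉ perturbedHypograph C A ℓ r := fun ⟨y, hy, hAy, hlt⟩ =>
    (hv y hy (by simpa using hAy.le)).not_gt hlt
  obtain ⟨f, hf⟩ := geometric_hahn_banach_open_point (convex_perturbedHypograph hC)
    isOpen_perturbedHypograph hv_notMem
  set g := f.comp (ContinuousLinearMap.inl ℝ F ℝ)
  set μ := f (0, 1)
  have hf_apply : ∀ z t, f (z, t) = g z + t * μ := fun z t => by
    have : ((z, t) : F × ℝ) = (z, 0) + t • (0, 1) := by simp
    rw [this, map_add, map_smul, smul_eq_mul]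
    rfl
  have hsep : ∀ y ∈ C, ∀ z t, ‖A y + z‖ < r → t < ℓ y → g z + t * μ < v * μ :=
    fun y hy z t hz ht => by simpa [hf_apply] using hf (z, t) ⟨y, hy, hz, ht⟩
  have hμ : 0 < μ := by
    have := hsep 0 h0 0 (min v 0 - 1) (by simpa using hr)
      (by rw [map_zero]; linarith [min_le_right v 0])
    rw [map_zero, zero_add] at this
    nlinarith [min_le_left v 0]
  refine ⟨μ⁻¹ • g, fun y hy => ?_⟩
  suffices ∀ w, ‖w‖ < r → (μ⁻¹ • g) w ≤ v - ℓ y + (μ⁻¹ • g) (A y) by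
    linarith [ContinuousLinearMap.mul_opNorm_le_of_forall_norm_lt hr this]
  intro w hw
  have hℓ : ℓ y ≤ v - μ⁻¹ * g (w - A y) := le_of_forall_lt fun t ht => by
    have := hsep y hy (w - A y) t (by simpa using hw) ht
    rw [lt_sub_iff_add_lt, ← mul_lt_mul_iff_of_pos_left hμ]
    field_simp
    linarith
  simp only [smul_apply, map_sub, smul_eq_mul] at hℓ ⊢
  linarith

end NormBallConstraint

section Box

variable {ι : Type*} [Fintype ι] {L U : ι → ℝ}

theorem sum_mul_sub_le_of_mem_box {y α β : ι → ℝ} (hy : ∀ j, L j ≤ y j ∧ y j ≤ U j)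
    (hα : ∀ j, 0 ≤ α j) (hβ : ∀ j, 0 ≤ β j) :
    ∑ j, y j * (α j - β j) ≤ ∑ j, α j * U j - ∑ j, β j * L j := by
  rw [← Finset.sum_sub_distrib]
  gcongr with j
  nlinarith [hy j, hα j, hβ j]

theorem exists_mem_box_sum_mul_eq (hLU : ∀ j, L j ≤ U j) (a : ι → ℝ) :
    ∃ y : ι → ℝ, (∀ j, L j ≤ y j ∧ y j ≤ U j) ∧
      ∑ j, y j * a j = ∑ j, max (a j) 0 * U j - ∑ j, max (-a j) 0 * L j := by
  refine ⟨fun j => if 0 ≤ a j then U j else L j, fun j => ?_, ?_⟩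
  · dsimp only
    split_ifs <;> simp [hLU j]
  · rw [← Finset.sum_sub_distrib]
    refine Finset.sum_congr rfl fun j _ => ?_
    rcases le_or_gt 0 (a j) with h | h
    · simp [h, mul_comm]
    · simp [h.not_ge, h.le, mul_comm]

end Box

section SecondOrderConeDuality

variable {ι m : Type*} [Fintype ι] [Fintype m] {B : Matrix m ι ℝ} {x L U : ι → ℝ} {r : ℝ}

theorem Matrix.sum_mulVec_mul_eq_sum_mul_sum (B : Matrix m ι ℝ) (y : ι → ℝ) (u : m → ℝ) :
    ∑ i, B.mulVec y i * u i = ∑ j, y j * ∑ i, B i j * u i := by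
  simp only [Matrix.mulVec, dotProduct, Finset.sum_mul, Finset.mul_sum]
  rw [Finset.sum_comm]
  simp only [mul_comm, mul_left_comm]

theorem sum_mul_le_dual_objective {y α β : ι → ℝ} {u : m → ℝ} {γ : ℝ}
    (hy : ∀ j, L j ≤ y j ∧ y j ≤ U j) (hBy : √(∑ i, B.mulVec y i ^ 2) ≤ r)
    (hx : ∀ j, α j - β j + ∑ i, B i j * u i = x j) (hu : √(∑ i, u i ^ 2) ≤ γ)
    (hα : ∀ j, 0 ≤ α j) (hβ : ∀ j, 0 ≤ β j) :
    ∑ j, y j * x j ≤ γ * r + ∑ j, α j * U j - ∑ j, β j * L j := by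
  have hsplit : ∑ j, y j * x j = ∑ j, y j * (α j - β j) + ∑ i, B.mulVec y i * u i := by
    rw [B.sum_mulVec_mul_eq_sum_mul_sum, ← Finset.sum_add_distrib]
    simp only [← hx, mul_add]
  have hcs : ∑ i, B.mulVec y i * u i ≤ r * γ :=
    (Real.sum_mul_le_sqrt_mul_sqrt _ _ _).trans
      (mul_le_mul hBy hu (Real.sqrt_nonneg _) ((Real.sqrt_nonneg _).trans hBy))
  linarith [sum_mul_sub_le_of_mem_box hy hα hβ]

theorem exists_dual_objective_le {v : ℝ} (hL : ∀ j, L j ≤ 0) (hU : ∀ j, 0 ≤ U j) (hr : 0 < r)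
    (hv : ∀ y : ι → ℝ, (∀ j, L j ≤ y j ∧ y j ≤ U j) → √(∑ i, B.mulVec y i ^ 2) ≤ r →
      ∑ j, y j * x j ≤ v) :
    ∃ (α β : ι → ℝ) (γ : ℝ) (u : m → ℝ),
      ((∀ j, α j - β j + ∑ i, B i j * u i = x j) ∧ √(∑ i, u i ^ 2) ≤ γ ∧
        (∀ j, 0 ≤ α j) ∧ (∀ j, 0 ≤ β j) ∧ 0 ≤ γ) ∧
      γ * r + ∑ j, α j * U j - ∑ j, β j * L j ≤ v := by
  let A : (ι → ℝ) →ₗ[ℝ] EuclideanSpace ℝ m :=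
    (WithLp.linearEquiv 2 ℝ (m → ℝ)).symm.toLinearMap ∘ₗ B.mulVecLin
  have hA : ∀ y, ‖A y‖ = √(∑ i, B.mulVec y i ^ 2) := fun y => by
    simp [A, EuclideanSpace.norm_eq]
  have hbox : Convex ℝ (univ.pi fun j => Icc (L j) (U j)) := convex_pi fun j _ => convex_Icc _ _
  obtain ⟨h, hh⟩ := exists_dual_of_forall_le (A := A) (ℓ := Fintype.linearCombination ℝ x) hbox
    (fun j _ => ⟨hL j, hU j⟩) hr fun y hy hAy => by
      simpa [Fintype.linearCombination_apply] using hv y (fun j => hy j trivial) (by rwa [← hA])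
  set u := (InnerProductSpace.toDual ℝ (EuclideanSpace ℝ m)).symm h
  have hh_apply : ∀ y, h (A y) = ∑ j, y j * ∑ i, B i j * u i := fun y => by
    rw [← B.sum_mulVec_mul_eq_sum_mul_sum, ← InnerProductSpace.toDual_symm_apply, PiLp.inner_apply]
    simp only [RCLike.inner_apply, conj_trivial]
    rfl
  have hh_norm : ‖h‖ = √(∑ i, u i ^ 2) := by
    rw [← (InnerProductSpace.toDual ℝ (EuclideanSpace ℝ m)).symm.norm_map, EuclideanSpace.norm_eq]
    simp only [Real.norm_eq_abs, sq_abs]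
    rfl
  set a := fun j => x j - ∑ i, B i j * u i
  obtain ⟨y, hy, hya⟩ := exists_mem_box_sum_mul_eq (fun j => (hL j).trans (hU j)) a
  refine ⟨fun j => max (a j) 0, fun j => max (-a j) 0, ‖h‖, u, ⟨fun j => ?_, hh_norm.ge,
    fun j => le_max_right _ _, fun j => le_max_right _ _, norm_nonneg h⟩, ?_⟩
  · rw [max_zero_sub_max_neg_zero_eq_self, sub_add_cancel]
  · have := hh y fun j _ => hy j
    simp only [Fintype.linearCombination_apply, smul_eq_mul, hh_apply] at this
    simp only [a, mul_sub, Finset.sum_sub_distrib] at hya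
    linarith

end SecondOrderConeDuality

theorem csSup_eq_csInf_of_forall_le_of_forall_exists_le {α : Type*}
    [ConditionallyCompleteLattice α] {S T : Set α} (hS : S.Nonempty) (hT : T.Nonempty)
    (hST : ∀ a ∈ S, ∀ b ∈ T, a ≤ b) (hTS : ∀ v, (∀ a ∈ S, a ≤ v) → ∃ b ∈ T, b ≤ v) :
    sSup S = sInf T := by
  obtain ⟨a₀, ha₀⟩ := hS
  obtain ⟨b₀, hb₀⟩ := hT
  obtain ⟨b, hb, hbS⟩ := hTS (sSup S) fun a ha => le_csSup ⟨b₀, fun a ha => hST a ha b₀ hb₀⟩ ha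
  exact (csSup_le ⟨a₀, ha₀⟩ fun a ha => le_csInf ⟨b₀, hb₀⟩ (hST a ha)).antisymm
    ((csInf_le ⟨a₀, hST a₀ ha₀⟩ hb).trans hbS)

/-- Strong second-order cone duality: the box-and-ellipsoid constrained linear
maximization problem has the same optimal value as its Lagrangian dual. -/
theorem stmt_11 (n : ℕ)
    (x ahat L U : Fin n → ℝ) (B : Matrix (Fin n) (Fin n) ℝ) (r : ℝ)
    (hL : ∀ j, L j < 0) (hU : ∀ j, 0 < U j) (hr : 0 < r) :
    sSup {t : ℝ | ∃ y : Fin n → ℝ,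
        ((∀ j, L j ≤ y j ∧ y j ≤ U j) ∧
          Real.sqrt (∑ i, (B.mulVec y i) ^ 2) ≤ r) ∧
        t = (∑ j, y j * x j) + (∑ j, ahat j * x j)} =
      sInf {t : ℝ | ∃ (α β : Fin n → ℝ) (γ : ℝ) (u : Fin n → ℝ),
        ((∀ j, α j - β j + ∑ i, B i j * u i = x j) ∧
          Real.sqrt (∑ i, (u i) ^ 2) ≤ γ ∧
          (∀ j, 0 ≤ α j) ∧ (∀ j, 0 ≤ β j) ∧ 0 ≤ γ) ∧
        t = γ * r + (∑ j, α j * U j) - (∑ j, β j * L j) +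
              (∑ j, ahat j * x j)} := by
  refine csSup_eq_csInf_of_forall_le_of_forall_exists_le
    ⟨_, 0, ⟨fun j => ⟨(hL j).le, (hU j).le⟩, by simpa using hr.le⟩, rfl⟩
    ⟨_, fun j => max (x j) 0, fun j => max (-x j) 0, 0, 0, ⟨fun j => by
      simp [max_zero_sub_max_neg_zero_eq_self], by simp, fun _ => le_max_right _ _,
      fun _ => le_max_right _ _, le_rfl⟩, rfl⟩ ?_ ?_
  · rintro _ ⟨y, ⟨hy, hBy⟩, rfl⟩ _ ⟨α, β, γ, u, ⟨hx, hu, hα, hβ, -⟩, rfl⟩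
    linarith [sum_mul_le_dual_objective hy hBy hx hu hα hβ]
  · intro v hv
    obtain ⟨α, β, γ, u, hfeas, hle⟩ := exists_dual_objective_le (v := v - ∑ j, ahat j * x j)
      (fun j => (hL j).le) (fun j => (hU j).le) hr fun y hy hBy => by
        linarith [hv _ ⟨y, ⟨hy, hBy⟩, rfl⟩]
    exact ⟨_, ⟨α, β, γ, u, hfeas, rfl⟩, by linarith⟩
end

section
/- Let C(λ), λ ∈ [0,1], be a nested decreasing family of measurable sets with N(C(λ)) = 1 - λ, where N is the necessity measure induced by an upper semicontinuous possibility distribution π on ℝⁿ with λ-cuts C(λ). Suppose P is a probability measure with P(C(λ)) ≥ 1 - λ for all λ ∈ [0,1]. Then for any measurable A with C(1) ⊆ A, setting λ* = inf{λ ∈ [0,1] : C(λ) ⊆ A}, one has N(A) = 1 - λ* and P(A) ≥ P(C(λ*)) ≥ 1 - λ* = N(A), provided C(λ*) ⊆ A (which holds by right-continuity of λ ↦ C(λ) arising from C(λ) = ∩_{λ'<λ} C(λ') for λ > 0). -/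
open Set MeasureTheory

/-- Key step of Proposition 2: if P(C(λ)) ≥ 1 - λ for all λ ∈ [0,1], then for
any measurable A ⊇ C(1), with λ* = inf{λ : C(λ) ⊆ A} and C(λ*) ⊆ A, one has
N(A) = 1 - λ* and P(A) ≥ 1 - λ* = N(A). -/
theorem stmt_18 (n : ℕ) (π : (Fin n → ℝ) → ℝ)
    (hπ : ∀ a, π a ∈ Set.Icc (0:ℝ) 1)
    (C : ℝ → Set (Fin n → ℝ))
    (hcut : ∀ lam ∈ Set.Ioc (0:ℝ) 1, C lam = {a | lam ≤ π a})
    (hC0 : C 0 = closure {a | 0 < π a})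
    (hnested : ∀ lam₁ lam₂ : ℝ, lam₂ ≤ lam₁ → C lam₁ ⊆ C lam₂)
    (hinter : ∀ lam ∈ Set.Ioc (0:ℝ) 1, C lam = ⋂ lam' ∈ Set.Ico (0:ℝ) lam, C lam')
    (hN : ∀ lam ∈ Set.Icc (0:ℝ) 1, sSup (π '' (C lam)ᶜ) = lam)
    (P : Measure (Fin n → ℝ)) [IsProbabilityMeasure P]
    (hP : ∀ lam ∈ Set.Icc (0:ℝ) 1, 1 - lam ≤ (P (C lam)).toReal)
    (A : Set (Fin n → ℝ)) (hAmeas : MeasurableSet A) (hA1 : C 1 ⊆ A)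
    (lamstar : ℝ) (hlam : lamstar = sInf {lam ∈ Set.Icc (0:ℝ) 1 | C lam ⊆ A})
    (hsub : C lamstar ⊆ A) :
    sSup (π '' Aᶜ) = lamstar ∧ 1 - lamstar ≤ (P A).toReal := by
  set S : Set ℝ := {lam ∈ Set.Icc (0:ℝ) 1 | C lam ⊆ A} with hS
  have hSne : S.Nonempty := ⟨1, ⟨by norm_num, by norm_num⟩, hA1⟩
  have hSbdd : BddBelow S := ⟨0, fun x hx => hx.1.1⟩
  have h0le : 0 ≤ lamstar := hlam ▸ le_csInf hSne (fun x hx => hx.1.1)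
  have hle1 : lamstar ≤ 1 := hlam ▸ csInf_le hSbdd ⟨⟨by norm_num, le_refl _⟩, hA1⟩
  have hPimbdd : BddAbove (π '' Aᶜ) := ⟨1, fun x ⟨a, _, ha⟩ => ha ▸ (hπ a).2⟩
  have main : sSup (π '' Aᶜ) = lamstar := by
    rcases eq_or_lt_of_le h0le with h0 | h0
    · -- lamstar = 0
      rw [← h0]
      have hzero : ∀ a ∉ A, π a = 0 := by
        intro a haA
        by_contra hne
        have hpos : 0 < π a := lt_of_le_of_ne (hπ a).1 (Ne.symm hne)
        have hlt : sInf S < min (π a) 1 := by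
          rw [← hlam, ← h0]; exact lt_min hpos one_pos
        obtain ⟨lam, hlamS, hlamlt⟩ := exists_lt_of_csInf_lt hSne hlt
        rcases eq_or_lt_of_le hlamS.1.1 with hl0 | hl0
        · exact haA (hlamS.2 (by rw [← hl0, hC0]; exact subset_closure hpos))
        · have : a ∈ C lam := by
            rw [hcut lam ⟨hl0, hlamS.1.2⟩]
            exact le_of_lt (lt_of_lt_of_le hlamlt (min_le_left _ _))
          exact haA (hlamS.2 this)
      apply le_antisymm
      · exact Real.sSup_le (fun x ⟨a, ha, hax⟩ => le_of_eq (hax ▸ hzero a ha)) le_rfl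
      · rcases eq_empty_or_nonempty Aᶜ with he | ⟨a, ha⟩
        · rw [he, image_empty, Real.sSup_empty]
        · have : (0:ℝ) ∈ π '' Aᶜ := ⟨a, ha, hzero a ha⟩
          exact le_csSup hPimbdd this
    · -- lamstar > 0
      apply le_antisymm
      · apply Real.sSup_le _ h0le
        rintro x ⟨a, ha, rfl⟩
        have : a ∉ C lamstar := fun h => ha (hsub h)
        rw [hcut lamstar ⟨h0, hle1⟩] at this
        exact le_of_not_ge this
      · by_contra hlt
        push_neg at hlt
        set m := max (sSup (π '' Aᶜ)) 0 with hm
        have hmlt : m < lamstar := max_lt hlt h0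
        set lam := (m + lamstar) / 2 with hlamdef
        have hlam0 : 0 < lam := by
          have : (0:ℝ) ≤ m := le_max_right _ _
          rw [hlamdef]; linarith
        have hlamlt : lam < lamstar := by
          rw [hlamdef]; linarith [hmlt]
        have hlam1 : lam ≤ 1 := le_of_lt (lt_of_lt_of_le hlamlt hle1)
        have hnotS : lam ∉ S := by
          intro h
          exact absurd (hlam ▸ csInf_le hSbdd h) (not_le.mpr hlamlt)
        have hnsub : ¬ C lam ⊆ A := by
          intro h; exact hnotS ⟨⟨le_of_lt hlam0, hlam1⟩, h⟩
        obtain ⟨a, haC, haA⟩ := not_subset.mp hnsub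
        have hpa : lam ≤ π a := by
          rw [hcut lam ⟨hlam0, hlam1⟩] at haC; exact haC
        have : π a ≤ m := le_max_of_le_left (le_csSup hPimbdd ⟨a, haA, rfl⟩)
        linarith
  refine ⟨main, ?_⟩
  have h1 : 1 - lamstar ≤ (P (C lamstar)).toReal := hP lamstar ⟨h0le, hle1⟩
  have h2 : P (C lamstar) ≤ P A := measure_mono hsub
  have h3 : (P (C lamstar)).toReal ≤ (P A).toReal :=
    ENNReal.toReal_mono (measure_ne_top P A) h2
  linarith
end
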